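/- A topological ring $A$ is admissible (linearly topologized by a countable descending chain of ideals, separated, complete, with an ideal of definition) if and only if $A$ is isomorphic as a topological ring to the limit $\varprojlim A_i$ of a projective system of discrete rings $A_1 \leftarrow A_2 \leftarrow \cdots$ indexed by $\mathbb{N}$ such that each transition map $A_{i+1} \to A_i$ is surjective with kernel consisting of nilpotent elements. -/

import Mathlib

open Filter Topology

/-- The descending chain `I` of ideals is a basis of neighborhoods of `0`
(this is the `{Iᵢ}`-topology). -/
def IsChainBasis (A : Type*) [CommRing A] [TopologicalSpace A] (I : ℕ → Ideal A) : Prop :=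
  Antitone I ∧ ∀ s : Set A, s ∈ nhds (0 : A) ↔ ∃ i, (I i : Set A) ⊆ s

/-- An ideal of definition: an open ideal all of whose elements are topologically nilpotent. -/
def IsIdealOfDefinition (A : Type*) [CommRing A] [TopologicalSpace A] (J : Ideal A) : Prop :=
  IsOpen (J : Set A) ∧ ∀ x ∈ J, Filter.Tendsto (fun n => x ^ n) Filter.atTop (nhds (0 : A))

/-- An admissible ring: a topological ring, linearly topologized with a countable chain of
ideals as a basis of neighborhoods of `0`, separated, complete, admitting an ideal of
definition. -/
structure IsAdmissible (A : Type*) [CommRing A] [TopologicalSpace A] : Prop where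
  topRing : IsTopologicalRing A
  exists_chain : ∃ I : ℕ → Ideal A, IsChainBasis A I
  separated : ∀ x : A, (∀ U ∈ nhds (0 : A), x ∈ U) → x = 0
  complete : ∀ f : ℕ → A,
    (∀ U ∈ nhds (0 : A), ∃ N, ∀ m ≥ N, ∀ n ≥ N, f m - f n ∈ U) →
    ∃ a : A, ∀ U ∈ nhds (0 : A), ∃ N, ∀ n ≥ N, a - f n ∈ U
  exists_idealOfDef : ∃ J : Ideal A, IsIdealOfDefinition A J

/-- The topology of `A` is the `J`-adic topology: the powers `J ^ n` form a basis of
neighborhoods of `0`. -/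
def IsAdicTopology (A : Type*) [CommRing A] [TopologicalSpace A] (J : Ideal A) : Prop :=
  ∀ s : Set A, s ∈ nhds (0 : A) ↔ ∃ n : ℕ, ((J ^ n : Ideal A) : Set A) ⊆ s

universe u

/-- A presentation of the topological ring `A` as the inverse limit of a projective system of
discrete rings `B 0 ← B 1 ← ⋯`, with surjective transition maps whose kernels consist of
nilpotent elements.  The fields `inj` and `surj` say that the canonical map from `A` to the
limit is bijective, and `nhds_basis` says that the topology of `A` corresponds to the limit
of the discrete topologies (a basis of neighborhoods of `0` is given by the kernels of the
projections). -/
structure DiscreteLimitPresentation (A : Type u) [CommRing A] [TopologicalSpace A] :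
    Type (u + 1) where
  B : ℕ → Type u
  [ring : ∀ i, CommRing (B i)]
  trans : ∀ i, B (i + 1) →+* B i
  trans_surj : ∀ i, Function.Surjective (trans i)
  trans_ker_nilpotent : ∀ i, ∀ x : B (i + 1), trans i x = 0 → IsNilpotent x
  proj : ∀ i, A →+* B i
  compat : ∀ i, (trans i).comp (proj (i + 1)) = proj i
  inj : ∀ a : A, (∀ i, proj i a = 0) → a = 0
  surj : ∀ g : ∀ i, B i, (∀ i, trans i (g (i + 1)) = g i) → ∃ a : A, ∀ i, proj i a = g i
  nhds_basis : ∀ s : Set A, s ∈ nhds (0 : A) ↔ ∃ i, {a : A | proj i a = 0} ⊆ s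

/-!
Given a chain basis `Iᵢ` and an ideal of definition `J`, the ideals `Kᵢ = Iᵢ ∩ J` are again a
chain basis, and `A` is the limit of the discrete rings `A ⧸ Kᵢ`: separation and completeness
say exactly that `A` maps bijectively onto the compatible families, and an element of `Kᵢ`
lies in `J`, so it is topologically nilpotent and some power of it lies in the open ideal
`Kᵢ₊₁`. Conversely, the kernels of the projections of a discrete limit form a chain basis,
and an element of the first kernel is nilpotent modulo every kernel by induction along the
nilpotent transition kernels, so that kernel is an ideal of definition.
-/

theorem sub_mem_of_forall_succ_sub_mem {A : Type*} [CommRing A] {I : ℕ → Ideal A}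
    (hI : Antitone I) {f : ℕ → A} (hf : ∀ i, f (i + 1) - f i ∈ I i) {m n : ℕ} (hmn : m ≤ n) :
    f n - f m ∈ I m := by
  induction n, hmn using Nat.le_induction with
  | base => simp
  | succ n hmn ih =>
    simpa using (I m).add_mem (hI hmn (hf n)) ih

namespace IsChainBasis

variable {A : Type*} [CommRing A] [TopologicalSpace A] {I : ℕ → Ideal A}

theorem hasBasis (hI : IsChainBasis A I) :
    (𝓝 (0 : A)).HasBasis (fun _ => True) fun i => (I i : Set A) :=
  ⟨fun s => by simp [hI.2 s]⟩

theorem mem_nhds (hI : IsChainBasis A I) (i : ℕ) : (I i : Set A) ∈ 𝓝 (0 : A) :=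
  hI.hasBasis.mem_of_mem trivial

theorem inf (hI : IsChainBasis A I) {J : Ideal A} (hJ : (J : Set A) ∈ 𝓝 (0 : A)) :
    IsChainBasis A fun i => I i ⊓ J := by
  refine ⟨fun m n h => inf_le_inf_right J (hI.1 h), fun s => ⟨fun hs => ?_, ?_⟩⟩
  · obtain ⟨i, hi⟩ := (hI.2 s).1 hs
    exact ⟨i, fun x hx => hi hx.1⟩
  · rintro ⟨i, hi⟩
    exact mem_of_superset (inter_mem (hI.mem_nhds i) hJ) hi

theorem separated_iff (hI : IsChainBasis A I) :
    (∀ x : A, (∀ U ∈ 𝓝 (0 : A), x ∈ U) → x = 0) ↔ ∀ x : A, (∀ i, x ∈ I i) → x = 0 := by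
  refine forall_congr' fun x => imp_congr_left ?_
  simpa using hI.hasBasis.forall_iff (P := fun U => x ∈ U) fun s t hst hs => hst hs

/-- Completeness of a space with a chain basis `Iᵢ` amounts to lifting compatible families of
`∏ A ⧸ Iᵢ`, given by representatives `f i` with `f (i + 1) ≡ f i` modulo `I i`. -/
theorem complete_iff (hI : IsChainBasis A I) :
    (∀ f : ℕ → A, (∀ U ∈ 𝓝 (0 : A), ∃ N, ∀ m ≥ N, ∀ n ≥ N, f m - f n ∈ U) →
        ∃ a : A, ∀ U ∈ 𝓝 (0 : A), ∃ N, ∀ n ≥ N, a - f n ∈ U) ↔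
      ∀ f : ℕ → A, (∀ i, f (i + 1) - f i ∈ I i) → ∃ a : A, ∀ i, a - f i ∈ I i := by
  have cauchy_iff (f : ℕ → A) := hI.hasBasis.forall_iff
    (P := fun U => ∃ N, ∀ m ≥ N, ∀ n ≥ N, f m - f n ∈ U)
    fun s t hst ⟨N, hN⟩ => ⟨N, fun m hm n hn => hst (hN m hm n hn)⟩
  have tendsto_iff (f : ℕ → A) (a : A) := hI.hasBasis.forall_iff
    (P := fun U => ∃ N, ∀ n ≥ N, a - f n ∈ U)
    fun s t hst ⟨N, hN⟩ => ⟨N, fun n hn => hst (hN n hn)⟩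
  simp only [cauchy_iff, tendsto_iff, forall_const]
  constructor
  · intro hcomp f hf
    have hle {m n : ℕ} (h : m ≤ n) := sub_mem_of_forall_succ_sub_mem hI.1 hf h
    obtain ⟨a, ha⟩ := hcomp f fun i =>
      ⟨i, fun m hm n hn => by simpa using (I i).sub_mem (hle hm) (hle hn)⟩
    refine ⟨a, fun i => ?_⟩
    obtain ⟨N, hN⟩ := ha i
    simpa using (I i).add_mem (hN (max N i) (le_max_left _ _)) (hle (le_max_right N i))
  · intro hlift f hf
    obtain ⟨φ, hφ, hφf⟩ := extraction_forall_of_eventually'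
      (P := fun i k => ∀ m ≥ k, ∀ n ≥ k, f m - f n ∈ I i) fun i =>
        let ⟨N, hN⟩ := hf i
        ⟨N, fun k hk m hm n hn => hN m (hk.trans hm) n (hk.trans hn)⟩
    obtain ⟨a, ha⟩ := hlift (f ∘ φ) fun i =>
      hφf i _ (hφ.monotone (Nat.le_succ i)) _ le_rfl
    exact ⟨a, fun i => ⟨φ i, fun n hn => by
      simpa using (I i).add_mem (ha i) (hφf i _ le_rfl n hn)⟩⟩

end IsChainBasis

namespace DiscreteLimitPresentation

variable {A : Type u} [CommRing A] [TopologicalSpace A]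

def ofChainBasis {I : ℕ → Ideal A} (hI : IsChainBasis A I)
    (hsep : ∀ x : A, (∀ i, x ∈ I i) → x = 0)
    (hlift : ∀ f : ℕ → A, (∀ i, f (i + 1) - f i ∈ I i) → ∃ a : A, ∀ i, a - f i ∈ I i)
    (hnil : ∀ i, ∀ x ∈ I i, ∃ n, x ^ n ∈ I (i + 1)) : DiscreteLimitPresentation A where
  B i := A ⧸ I i
  trans i := Ideal.Quotient.factor (hI.1 (Nat.le_succ i))
  trans_surj i := Ideal.Quotient.factor_surjective _
  trans_ker_nilpotent i x hx := by
    obtain ⟨a, rfl⟩ := Ideal.Quotient.mk_surjective x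
    rw [Ideal.Quotient.factor_mk, Ideal.Quotient.eq_zero_iff_mem] at hx
    obtain ⟨n, hn⟩ := hnil i a hx
    exact ⟨n, by rwa [← map_pow, Ideal.Quotient.eq_zero_iff_mem]⟩
  proj i := Ideal.Quotient.mk (I i)
  compat i := Ideal.Quotient.factor_comp_mk _
  inj a ha := hsep a fun i => Ideal.Quotient.eq_zero_iff_mem.1 (ha i)
  surj g hg := by
    choose f hf using fun i => Ideal.Quotient.mk_surjective (g i)
    obtain ⟨a, ha⟩ := hlift f fun i => by
      rw [← Ideal.Quotient.eq, ← Ideal.Quotient.factor_mk (hI.1 (Nat.le_succ i)), hf, hg, hf]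
    exact ⟨a, fun i => by rw [← hf i]; exact Ideal.Quotient.eq.2 (ha i)⟩
  nhds_basis s := by
    simpa only [Ideal.Quotient.eq_zero_iff_mem, SetLike.setOfPred_mem_eq] using hI.2 s

section

variable (P : DiscreteLimitPresentation A)

attribute [local instance] DiscreteLimitPresentation.ring

theorem trans_proj (i : ℕ) (a : A) : P.trans i (P.proj (i + 1) a) = P.proj i a :=
  RingHom.congr_fun (P.compat i) a

theorem ker_proj_succ_le (i : ℕ) : RingHom.ker (P.proj (i + 1)) ≤ RingHom.ker (P.proj i) :=
  fun a ha => by rw [RingHom.mem_ker, ← P.trans_proj, ha, map_zero]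

theorem isChainBasis : IsChainBasis A fun i => RingHom.ker (P.proj i) :=
  ⟨antitone_nat_of_succ_le P.ker_proj_succ_le, P.nhds_basis⟩

theorem exists_pow_mem_ker_proj_succ {i : ℕ} {x : A} (hx : x ∈ RingHom.ker (P.proj i)) :
    ∃ n, x ^ n ∈ RingHom.ker (P.proj (i + 1)) := by
  obtain ⟨n, hn⟩ := P.trans_ker_nilpotent i (P.proj (i + 1) x) (by rwa [P.trans_proj])
  exact ⟨n, by rw [RingHom.mem_ker, map_pow, hn]⟩

theorem exists_pow_mem_ker_proj {x : A} (hx : x ∈ RingHom.ker (P.proj 0)) (i : ℕ) :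
    ∃ n, x ^ n ∈ RingHom.ker (P.proj i) := by
  induction i with
  | zero => exact ⟨1, by simpa using hx⟩
  | succ i ih =>
    obtain ⟨m, hm⟩ := ih
    obtain ⟨n, hn⟩ := P.exists_pow_mem_ker_proj_succ hm
    exact ⟨m * n, by rwa [pow_mul]⟩

theorem isIdealOfDefinition_ker_proj_zero [IsTopologicalRing A] :
    IsIdealOfDefinition A (RingHom.ker (P.proj 0)) := by
  refine ⟨(RingHom.ker (P.proj 0)).toAddSubgroup.isOpen_of_mem_nhds (P.isChainBasis.mem_nhds 0),
    fun x hx => P.isChainBasis.hasBasis.tendsto_right_iff.2 fun i _ => ?_⟩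
  obtain ⟨n, hn⟩ := P.exists_pow_mem_ker_proj hx i
  exact eventually_atTop.2 ⟨n, fun m hm => Ideal.pow_mem_of_pow_mem _ hn hm⟩

theorem exists_forall_sub_mem_ker_proj (f : ℕ → A)
    (hf : ∀ i, f (i + 1) - f i ∈ RingHom.ker (P.proj i)) :
    ∃ a : A, ∀ i, a - f i ∈ RingHom.ker (P.proj i) := by
  obtain ⟨a, ha⟩ := P.surj (fun i => P.proj i (f i)) fun i => by
    rw [P.trans_proj, ← sub_eq_zero, ← map_sub]
    exact hf i
  exact ⟨a, fun i => by rw [RingHom.mem_ker, map_sub, ha, sub_self]⟩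

end

theorem isAdmissible [IsTopologicalRing A] (P : DiscreteLimitPresentation A) : IsAdmissible A where
  topRing := inferInstance
  exists_chain := ⟨_, P.isChainBasis⟩
  separated := P.isChainBasis.separated_iff.2 P.inj
  complete := P.isChainBasis.complete_iff.2 P.exists_forall_sub_mem_ker_proj
  exists_idealOfDef := ⟨_, P.isIdealOfDefinition_ker_proj_zero⟩

end DiscreteLimitPresentation

theorem stmt_1 (A : Type u) [CommRing A] [TopologicalSpace A] [IsTopologicalRing A] :
    IsAdmissible A ↔ Nonempty (DiscreteLimitPresentation A) := by
  refine ⟨fun ⟨_, ⟨I, hI⟩, hsep, hcomp, ⟨J, hJ⟩⟩ => ?_, fun ⟨P⟩ => P.isAdmissible⟩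
  have hK := hI.inf (hJ.1.mem_nhds J.zero_mem)
  refine ⟨.ofChainBasis hK (hK.separated_iff.1 hsep) (hK.complete_iff.1 hcomp) fun i x hx => ?_⟩
  exact (hJ.2 x hx.2 |>.eventually (hK.mem_nhds (i + 1))).exists
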